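/- arXiv:2107.03154 — 2 statements merged into one kernel-verified Lean document; each statement's English description precedes it below -/
import Mathlib

section
/- Let H ≤ K and G ≤ L be subgroups of a free group F. If H is dependence-closed in K and G is dependence-closed in L, then H ∩ G is dependence-closed in K ∩ L. -/
open scoped Monoid.Coprod

variable {F : Type*}

/-- The canonical homomorphism `φ_g : H ∗ ⟨x⟩ → F` from the free product of `H` with an
infinite cyclic group (the free group on one generator `x`), restricting to the inclusion
`H ↪ F` and sending `x` to `g`. -/
noncomputable def phi [Group F] (H : Subgroup F) (g : F) :
    (↥H ∗ FreeGroup Unit) →* F :=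
  Monoid.Coprod.lift H.subtype (FreeGroup.lift fun _ => g)

/-- `g` depends on `H` (is algebraic over `H`) if `φ_g` is not injective. -/
def Depends [Group F] (H : Subgroup F) (g : F) : Prop :=
  ¬ Function.Injective (phi H g)

/-- `dep H`: the set of elements of `F` that depend on `H`. -/
def depSet [Group F] (H : Subgroup F) : Set F := {g | Depends H g}

/-- `Dep H`: the subgroup generated by the elements that depend on `H`. -/
noncomputable def DepSubgroup [Group F] (H : Subgroup F) : Subgroup F :=
  Subgroup.closure (depSet H)

/-- The rank of a subgroup: the minimal cardinality of a generating set. For subgroups of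
free groups this equals the cardinality of a free basis. -/
noncomputable def rk [Group F] (H : Subgroup F) : Cardinal :=
  ⨅ S : {S : Set F // Subgroup.closure S = H}, Cardinal.mk S.1


/-- `H` is dependence-closed in `G`: no element of `G \ H` depends on `H`. -/
def DepClosedIn [Group F] (H G : Subgroup F) : Prop :=
  ∀ g : F, g ∈ G → g ∉ H → ¬ Depends H g

/-!
Dependence is monotone in the subgroup: for `H' ≤ H`, the map `H' ∗ ⟨x⟩ → H ∗ ⟨x⟩` induced by the
inclusion is injective (a free product of injective homomorphisms is injective, as one sees on
reduced words), and `φ_g` for `H'` factors through it. So if `g ∈ (K ⊓ L) \ (H ⊓ G)` depended on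
`H ⊓ G`, then, lying outside `H` or outside `G`, it would depend on that subgroup, contrary to
closedness in `K` or in `L`.
-/

open Function

namespace Monoid.CoprodI

variable {ι : Type*} {M N : ι → Type*} [∀ i, Monoid (M i)] [∀ i, Monoid (N i)]

def map (f : ∀ i, M i →* N i) : CoprodI M →* CoprodI N :=
  lift fun i => of.comp (f i)

@[simp]
theorem map_of (f : ∀ i, M i →* N i) {i : ι} (m : M i) : map f (of m) = of (f i m) :=
  lift_of _ _

namespace Word

def map (f : ∀ i, M i →* N i) (hf : ∀ i, Injective (f i)) (w : Word M) : Word N where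
  toList := w.toList.map (Sigma.map id fun i => f i)
  ne_one := by
    simp only [List.mem_map]
    rintro _ ⟨l, hl, rfl⟩ h
    exact w.ne_one l hl (hf l.1 (h.trans (map_one _).symm))
  chain_ne := List.isChain_map_of_isChain (Sigma.map id fun i => f i) (fun _ _ h => h) w.chain_ne

theorem map_injective (f : ∀ i, M i →* N i) (hf : ∀ i, Injective (f i)) :
    Injective (map f hf) := fun _ _ h =>
  Word.ext (List.map_injective_iff.mpr (injective_id.sigma_map hf) (congrArg toList h))

theorem prod_map (f : ∀ i, M i →* N i) (hf : ∀ i, Injective (f i)) (w : Word M) :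
    (w.map f hf).prod = CoprodI.map f w.prod := by
  simp only [prod, map, List.map_map, map_list_prod]
  exact congrArg _ (List.map_congr_left fun l _ => (map_of f l.2).symm)

theorem prod_bijective : Bijective (prod : Word M → CoprodI M) := by
  classical
  exact equiv.symm.bijective

end Word

theorem map_injective (f : ∀ i, M i →* N i) (hf : ∀ i, Injective (f i)) :
    Injective (map f) := by
  intro x y h
  obtain ⟨w, rfl⟩ := Word.prod_bijective.surjective x
  obtain ⟨v, rfl⟩ := Word.prod_bijective.surjective y
  rw [← Word.prod_map f hf, ← Word.prod_map f hf] at h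
  rw [Word.map_injective f hf (Word.prod_bijective.injective h)]

end Monoid.CoprodI

namespace Monoid.Coprod

universe u v

section BoolFamily

variable (M : Type u) (N : Type v) [Monoid M] [Monoid N]

/-- The `ULift`s put the two factors in one universe, as `CoprodI` requires. -/
abbrev boolFamily : Bool → Type (max u v) := fun b => cond b (ULift.{v} M) (ULift.{u} N)

instance boolFamily.instMonoid : ∀ b, Monoid (boolFamily M N b)
  | true => inferInstanceAs (Monoid (ULift M))
  | false => inferInstanceAs (Monoid (ULift N))

noncomputable def toCoprodI : M ∗ N →* CoprodI (boolFamily M N) :=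
  lift ((CoprodI.of (i := true)).comp MulEquiv.ulift.symm.toMonoidHom)
    ((CoprodI.of (i := false)).comp MulEquiv.ulift.symm.toMonoidHom)

noncomputable def ofCoprodI : CoprodI (boolFamily M N) →* M ∗ N :=
  CoprodI.lift fun b => Bool.rec (motive := fun b => boolFamily M N b →* M ∗ N)
    (inr.comp MulEquiv.ulift.toMonoidHom) (inl.comp MulEquiv.ulift.toMonoidHom) b

theorem ofCoprodI_comp_toCoprodI : (ofCoprodI M N).comp (toCoprodI M N) = .id _ := by
  ext <;> simp [toCoprodI, ofCoprodI, CoprodI.lift_of]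

theorem toCoprodI_injective : Injective (toCoprodI M N) :=
  LeftInverse.injective (g := ofCoprodI M N) (DFunLike.congr_fun (ofCoprodI_comp_toCoprodI M N))

end BoolFamily

variable {M M' : Type u} {N N' : Type v} [Monoid M] [Monoid N] [Monoid M'] [Monoid N']

def boolFamilyMap (f : M →* M') (g : N →* N') : ∀ b, boolFamily M N b →* boolFamily M' N' b
  | true => MulEquiv.ulift.symm.toMonoidHom.comp (f.comp MulEquiv.ulift.toMonoidHom)
  | false => MulEquiv.ulift.symm.toMonoidHom.comp (g.comp MulEquiv.ulift.toMonoidHom)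

theorem boolFamilyMap_injective {f : M →* M'} {g : N →* N'} (hf : Injective f)
    (hg : Injective g) : ∀ b, Injective (boolFamilyMap f g b)
  | true => ULift.up_injective.comp (hf.comp ULift.down_injective)
  | false => ULift.up_injective.comp (hg.comp ULift.down_injective)

theorem toCoprodI_comp_map (f : M →* M') (g : N →* N') :
    (toCoprodI M' N').comp (map f g) =
      (CoprodI.map (boolFamilyMap f g)).comp (toCoprodI M N) := by
  ext <;> simp [toCoprodI, boolFamilyMap]

theorem map_injective {f : M →* M'} {g : N →* N'} (hf : Injective f) (hg : Injective g) :
    Injective (map f g) := by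
  refine Injective.of_comp (f := toCoprodI M' N') ?_
  rw [← MonoidHom.coe_comp, toCoprodI_comp_map, MonoidHom.coe_comp]
  exact (CoprodI.map_injective _ (boolFamilyMap_injective hf hg)).comp (toCoprodI_injective M N)

end Monoid.Coprod

section Dependence

variable [Group F] {H' H : Subgroup F}

theorem phi_comp_map_inclusion (h : H' ≤ H) (g : F) :
    (phi H g).comp (Monoid.Coprod.map (Subgroup.inclusion h) (.id _)) = phi H' g :=
  Monoid.Coprod.hom_ext rfl rfl

theorem Depends.mono (h : H' ≤ H) {g : F} (hg : Depends H' g) : Depends H g := fun hinj =>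
  hg <| phi_comp_map_inclusion h g ▸
    hinj.comp (Monoid.Coprod.map_injective (Subgroup.inclusion_injective h) injective_id)

end Dependence

theorem depClosedIn_inf_general [Group F] (H K G L : Subgroup F)
    (h₁ : DepClosedIn H K) (h₂ : DepClosedIn G L) :
    DepClosedIn (H ⊓ G) (K ⊓ L) := by
  rintro g ⟨hgK, hgL⟩ hg hdep
  rcases not_and_or.mp hg with hgH | hgG
  · exact h₁ g hgK hgH (hdep.mono inf_le_left)
  · exact h₂ g hgL hgG (hdep.mono inf_le_right)

/-- intersections of dependence-closed pairs are dependence-closed. -/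
theorem depClosedIn_inf [Group F] [IsFreeGroup F] (H K G L : Subgroup F)
    (hHK : H ≤ K) (hGL : G ≤ L)
    (h₁ : DepClosedIn H K) (h₂ : DepClosedIn G L) :
    DepClosedIn (H ⊓ G) (K ⊓ L) :=
  depClosedIn_inf_general H K G L h₁ h₂
end

section
/- Let F be a free group and H ≤ F a subgroup. If H is a nontrivial normal subgroup of F, or if H has finite index in F, then Dep(H) = F, i.e., the subgroup generated by the elements of F that depend on H is all of F. -/
open scoped Monoid.Coprod

variable {F : Type*}

/-!
Every element `g` of the ambient group depends on `H`. If `H` has finite index, some power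
`g ^ n` with `n > 0` lies in `H`, and `x ^ n ≠ g ^ n` in `H ∗ ⟨x⟩` have the same image. If `H`
is normal and contains `h ≠ 1`, then `x h x⁻¹` and `g h g⁻¹ ∈ H` have the same image, yet a
conjugate `x h x⁻¹` is never in the factor `H`: in the regular wreath product `H ≀ᵣ ⟨x⟩`, `h`
becomes a function supported at `1` and its conjugate by `x` a function supported at `x`.
-/

open Monoid

namespace RegularWreathProduct

variable {D Q : Type*} [Group D] [Group Q] [DecidableEq Q]

def single : D →* D ≀ᵣ Q where
  toFun d := ⟨Pi.mulSingle 1 d, 1⟩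
  map_one' := by ext <;> simp
  map_mul' a b := by ext <;> simp [Pi.mulSingle_mul]

@[simp]
theorem left_single (d : D) : (single d : D ≀ᵣ Q).left = Pi.mulSingle 1 d := rfl

theorem left_inl_mul_single_mul_inv (q : Q) (d : D) :
    (inl q * single d * (inl q)⁻¹ : D ≀ᵣ Q).left = Pi.mulSingle q d := by
  ext x
  by_cases hx : x = q
  · subst hx; simp
  · simp [Pi.mulSingle_apply, hx, Ne.symm hx, inv_mul_eq_one]

end RegularWreathProduct

namespace Monoid.Coprod

variable {M N : Type*} [Group M] [Group N]

theorem inr_mul_inl_mul_inv_ne_inl {a : M} (ha : a ≠ 1) {y : N} (hy : y ≠ 1) (c : M) :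
    inr y * inl a * (inr y)⁻¹ ≠ (inl c : M ∗ N) := by
  classical
  intro heq
  have hleft := congrArg (fun w => (lift RegularWreathProduct.single RegularWreathProduct.inl w :
    M ≀ᵣ N).left y) heq
  simp only [map_mul, map_inv, lift_apply_inl, lift_apply_inr,
    RegularWreathProduct.left_inl_mul_single_mul_inv, RegularWreathProduct.left_single,
    Pi.mulSingle_eq_same, Pi.mulSingle_eq_of_ne hy] at hleft
  exact ha hleft

theorem inr_ne_inl {y : N} (hy : y ≠ 1) (c : M) : (inr y : M ∗ N) ≠ inl c :=
  fun heq => hy (by simpa using congrArg snd heq)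

end Monoid.Coprod

section Dependence

variable [Group F] {H : Subgroup F}

theorem depends_of_pow_mem {g : F} {n : ℕ} (hn : n ≠ 0) (hgn : g ^ n ∈ H) : Depends H g := by
  intro hinj
  refine Coprod.inr_ne_inl ((pow_eq_one_iff_left hn).not.mpr (FreeGroup.of_ne_one ()))
    ⟨g ^ n, hgn⟩ (hinj ?_)
  simp [phi]

theorem depends_of_conj_mem {g h : F} (hh : h ∈ H) (h1 : h ≠ 1) (hconj : g * h * g⁻¹ ∈ H) :
    Depends H g := by
  intro hinj
  refine Coprod.inr_mul_inl_mul_inv_ne_inl (a := (⟨h, hh⟩ : H)) (Subtype.coe_ne_coe.mp h1)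
    (FreeGroup.of_ne_one ()) ⟨g * h * g⁻¹, hconj⟩ (hinj ?_)
  simp [phi]

theorem depends_of_index_ne_zero (hH : H.index ≠ 0) (g : F) : Depends H g :=
  have ⟨_, hn, _, hgn⟩ := H.exists_pow_mem_of_index_ne_zero hH g
  depends_of_pow_mem hn.ne' hgn

theorem depends_of_normal [hN : H.Normal] (hH : H ≠ ⊥) (g : F) : Depends H g :=
  have ⟨⟨h, hh⟩, h1⟩ := Subgroup.ne_bot_iff_exists_ne_one.mp hH
  depends_of_conj_mem hh (by simpa using h1) (hN.conj_mem h hh g)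

end Dependence

theorem DepSubgroup_eq_top_general [Group F] (H : Subgroup F)
    (h : (H ≠ ⊥ ∧ H.Normal) ∨ H.index ≠ 0) : DepSubgroup H = ⊤ := by
  have hdep : ∀ g, Depends H g := by
    rcases h with ⟨hH, hN⟩ | hH
    · exact depends_of_normal hH
    · exact depends_of_index_ne_zero hH
  have huniv : depSet H = Set.univ := Set.eq_univ_of_forall hdep
  rw [DepSubgroup, huniv, Subgroup.closure_univ]

/-- if `H` is a nontrivial normal subgroup of `F`, or has finite index in
`F`, then `Dep H = F`. -/
theorem DepSubgroup_eq_top [Group F] [IsFreeGroup F] (H : Subgroup F)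
    (h : (H ≠ ⊥ ∧ H.Normal) ∨ H.index ≠ 0) : DepSubgroup H = ⊤ :=
  DepSubgroup_eq_top_general H h
end
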